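/- arXiv:2511.15146 — 4 statements merged into one kernel-verified Lean document; each statement's English description precedes it below -/
import Mathlib

section
/- Let Z_1, ..., Z_{n+1} be exchangeable real-valued random variables (ties allowed) and let τ be uniform on (0,1) independent of them. Define F_{n+1}(t) = (1/(n+1)) Σ_{i=1}^{n+1} 1{Z_i ≤ t} and F_{n+1}^-(t) = (1/(n+1)) Σ_{i=1}^{n+1} 1{Z_i < t}. Then the randomized probability integral transform U = (1-τ) F_{n+1}^-(Z_{n+1}) + τ F_{n+1}(Z_{n+1}) is uniformly distributed on (0,1). -/
open MeasureTheory Finset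
open scoped ENNReal

/-!
Fix the sample `z` of size `m` and an index `j` with `a` entries strictly below `z j` and `b`
entries equal to it. The transform built from `z j` in place of the last entry is then
`U_j = (a + τ b) / m`, uniform on `[a/m, (a+b)/m]`; the `b` tied indices share this interval,
and the intervals of the distinct values tile `[0, 1]`, so the average over `j` of the laws of
`U_j` is uniform on `(0, 1)`. By exchangeability the law of `U_j` does not depend on `j`, so it
equals this average.
-/

theorem Finset.sum_sub_telescope_of_lt {α M G : Type*} [LinearOrder α] [AddCommMonoid M]
    [AddCommGroup G] (F : M → G) (B : α → M) (S : Finset α) :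
    ∑ v ∈ S, (F (∑ w ∈ S with w < v, B w + B v) - F (∑ w ∈ S with w < v, B w))
      = F (∑ w ∈ S, B w) - F 0 := by
  induction S using Finset.induction_on_max with
  | empty => simp
  | insert a s hmax ih =>
    have ha : a ∉ s := fun h => lt_irrefl a (hmax a h)
    have hlt_a : {w ∈ insert a s | w < a} = s := by
      rw [filter_insert, if_neg (lt_irrefl a), filter_true_of_mem hmax]
    have hlt_v : ∀ v ∈ s, {w ∈ insert a s | w < v} = {w ∈ s | w < v} := fun v hv => by
      rw [filter_insert, if_neg (not_lt.2 (hmax v hv).le)]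
    have hs : ∑ v ∈ s, (F (∑ w ∈ insert a s with w < v, B w + B v)
        - F (∑ w ∈ insert a s with w < v, B w)) = F (∑ w ∈ s, B w) - F 0 := by
      rw [← ih]; exact sum_congr rfl fun v hv => by rw [hlt_v v hv]
    rw [sum_insert ha, hlt_a, hs, sum_insert ha, add_comm (B a)]
    abel

section Ranks

variable {ι α : Type*} [Fintype ι] [LinearOrder α]

theorem card_filter_le_eq_card_filter_lt_add (z : ι → α) (v : α) :
    #{i | z i ≤ v} = #{i | z i < v} + #{i | z i = v} := by
  classical
  rw [← card_union_of_disjoint (disjoint_filter.2 fun _ _ h h' => h.ne h'), ← filter_or]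
  simp only [le_iff_lt_or_eq]

theorem card_filter_lt_eq_sum_card_filter_eq (z : ι → α) (v : α) :
    #{i | z i < v} = ∑ w ∈ univ.image z with w < v, #{i | z i = w} := by
  rw [card_eq_sum_card_fiberwise (f := z) (t := {w ∈ univ.image z | w < v})
    fun i hi => by simpa using hi]
  refine sum_congr rfl fun w hw => congrArg card ?_
  rw [filter_filter]
  refine filter_congr fun i _ => and_iff_right_of_imp ?_
  rintro rfl
  exact (mem_filter.1 hw).2

/-- Grouping the indices by the value of `z j`, the sum telescopes along the sorted values. -/
theorem sum_sub_div_card_filter_eq (z : ι → α) (F : ℕ → ℝ) :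
    ∑ j, (F #{i | z i ≤ z j} - F #{i | z i < z j}) / #{i | z i = z j}
      = F (Fintype.card ι) - F 0 := by
  rw [sum_comp (fun v => (F #{i | z i ≤ v} - F #{i | z i < v}) / #{i | z i = v}) z,
    ← card_univ, card_eq_sum_card_image z univ,
    ← sum_sub_telescope_of_lt F (fun w => #{i | z i = w}) (univ.image z)]
  refine sum_congr rfl fun v hv => ?_
  obtain ⟨j, -, rfl⟩ := mem_image.1 hv
  have hpos : (0 : ℝ) < #{i | z i = z j} := by exact_mod_cast card_pos.2 ⟨j, by simp⟩
  rw [nsmul_eq_mul, mul_div_cancel₀ _ hpos.ne', card_filter_le_eq_card_filter_lt_add,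
    card_filter_lt_eq_sum_card_filter_eq]

end Ranks

/-- `randomizedPIT z j s = (1 - s) F⁻(z j) + s F(z j)`, where `F` and `F⁻` are the right- and
left-continuous empirical distribution functions of the sample `z`. -/
noncomputable def randomizedPIT {ι : Type*} [Fintype ι] (z : ι → ℝ) (j : ι) (s : ℝ) : ℝ :=
  (1 - s) * (#{i | z i < z j} / Fintype.card ι) + s * (#{i | z i ≤ z j} / Fintype.card ι)

theorem volume_restrict_Ioo_Iic (c : ℝ) :
    volume.restrict (Set.Ioo (0 : ℝ) 1) (Set.Iic c) = ENNReal.ofReal (min 1 c) := by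
  rw [Measure.restrict_congr_set Ioo_ae_eq_Ioc, Measure.restrict_apply measurableSet_Iic,
    Set.inter_comm, Set.Ioc_inter_Iic, Real.volume_Ioc, sub_zero]

theorem volume_restrict_Ioo_setOf_add_mul_le {a b : ℝ} (x : ℝ) (ha : 0 ≤ a) (hb : 0 < b) :
    volume.restrict (Set.Ioo (0 : ℝ) 1) {s | a + s * b ≤ x}
      = ENNReal.ofReal ((min (max x 0) (a + b) - min (max x 0) a) / b) := by
  have hset : {s | a + s * b ≤ x} = Set.Iic ((x - a) / b) := by
    ext s
    simp only [Set.mem_ofPred_eq, Set.mem_Iic, le_div_iff₀ hb]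
    constructor <;> intro h <;> linarith
  have hclamp : max (min 1 ((x - a) / b)) 0 = (min (max x 0) (a + b) - min (max x 0) a) / b := by
    rw [eq_div_iff hb.ne']
    simp only [min_def, max_def]
    split_ifs <;> nlinarith [div_mul_cancel₀ (x - a) hb.ne']
  rw [hset, volume_restrict_Ioo_Iic, ← hclamp, ENNReal.ofReal_max, ENNReal.ofReal_zero,
    _root_.max_zero]

theorem sum_volume_restrict_Ioo_randomizedPIT_le {ι : Type*} [Fintype ι] (z : ι → ℝ) (t : ℝ) :
    ∑ j, volume.restrict (Set.Ioo (0 : ℝ) 1) {s | randomizedPIT z j s ≤ t}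
      = Fintype.card ι * volume.restrict (Set.Ioo (0 : ℝ) 1) (Set.Iic t) := by
  set x := max (Fintype.card ι * t) 0
  have hterm : ∀ j, volume.restrict (Set.Ioo (0 : ℝ) 1) {s | randomizedPIT z j s ≤ t}
      = ENNReal.ofReal ((min x #{i | z i ≤ z j} - min x #{i | z i < z j}) / #{i | z i = z j}) := by
    intro j
    have hm : (0 : ℝ) < Fintype.card ι := by have := Nonempty.intro j; positivity
    have hB : (0 : ℝ) < #{i | z i = z j} := by exact_mod_cast card_pos.2 ⟨j, by simp⟩
    have hC : (#{i | z i ≤ z j} : ℝ) = #{i | z i < z j} + #{i | z i = z j} := by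
      exact_mod_cast card_filter_le_eq_card_filter_lt_add z (z j)
    have hset : {s | randomizedPIT z j s ≤ t}
        = {s | (#{i | z i < z j} : ℝ) + s * #{i | z i = z j} ≤ Fintype.card ι * t} := by
      ext s
      have hpit : randomizedPIT z j s
          = (#{i | z i < z j} + s * #{i | z i = z j}) / Fintype.card ι := by
        rw [randomizedPIT, hC]; field_simp; ring
      rw [Set.mem_ofPred_eq, Set.mem_ofPred_eq, hpit, div_le_iff₀ hm, mul_comm t]
    rw [hset, volume_restrict_Ioo_setOf_add_mul_le _ (Nat.cast_nonneg _) hB, ← hC]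
  have hnonneg : ∀ j ∈ univ,
      0 ≤ (min x #{i | z i ≤ z j} - min x #{i | z i < z j}) / (#{i | z i = z j} : ℝ) := by
    intro j _
    refine div_nonneg (sub_nonneg.2 (min_le_min_left x ?_)) (Nat.cast_nonneg _)
    exact_mod_cast card_le_card (monotone_filter_right _ fun _ _ => le_of_lt)
  have hm : (0 : ℝ) ≤ Fintype.card ι := Nat.cast_nonneg _
  have hx : min x (Fintype.card ι) = Fintype.card ι * min 1 (max t 0) := by
    rw [mul_min_of_nonneg _ _ hm, mul_max_of_nonneg _ _ hm, mul_one, mul_zero, min_comm]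
  rw [sum_congr rfl fun j _ => hterm j, ← ENNReal.ofReal_sum_of_nonneg hnonneg,
    sum_sub_div_card_filter_eq z fun k => min x k, Nat.cast_zero,
    min_eq_right (le_max_right _ _), sub_zero, hx, ENNReal.ofReal_mul hm, ENNReal.ofReal_natCast,
    volume_restrict_Ioo_Iic]
  simp [ENNReal.ofReal_min, ENNReal.ofReal_max]

theorem measurable_card_filter {ι β : Type*} [Fintype ι] [MeasurableSpace β] (p : ι → β → Prop)
    [∀ i x, Decidable (p i x)] (hp : ∀ i, MeasurableSet {x | p i x}) :
    Measurable fun x => (#{i | p i x} : ℝ) := by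
  simp only [card_filter, Nat.cast_sum, Nat.cast_ite, Nat.cast_one, Nat.cast_zero]
  exact Finset.measurable_sum _ fun i _ => Measurable.ite (hp i) measurable_const measurable_const

theorem measurable_randomizedPIT {ι : Type*} [Fintype ι] (j : ι) :
    Measurable fun p : ℝ × (ι → ℝ) => randomizedPIT p.2 j p.1 := by
  have hlt := measurable_card_filter (fun i (z : ι → ℝ) => z i < z j)
    fun i => measurableSet_lt (measurable_pi_apply i) (measurable_pi_apply j)
  have hle := measurable_card_filter (fun i (z : ι → ℝ) => z i ≤ z j)
    fun i => measurableSet_le (measurable_pi_apply i) (measurable_pi_apply j)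
  exact ((measurable_const.sub measurable_fst).mul ((hlt.comp measurable_snd).div_const _)).add
    (measurable_fst.mul ((hle.comp measurable_snd).div_const _))

theorem randomizedPIT_comp_perm {ι : Type*} [Fintype ι] (z : ι → ℝ) (σ : Equiv.Perm ι) (j : ι)
    (s : ℝ) : randomizedPIT (z ∘ σ) j s = randomizedPIT z (σ j) s := by
  have hcard (p : ι → Prop) [DecidablePred p] : #{i | p (σ i)} = #{i | p i} :=
    card_equiv σ fun i => by simp
  simp only [randomizedPIT, Function.comp_apply]
  rw [hcard (fun i => z i < z (σ j)), hcard (fun i => z i ≤ z (σ j))]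

theorem map_randomizedPIT_perm_apply {ι : Type*} [Fintype ι] (ν : Measure ℝ) [SFinite ν]
    {μ : Measure (ι → ℝ)} [SFinite μ] (hμ : ∀ σ : Equiv.Perm ι, μ.map (· ∘ σ) = μ)
    (σ : Equiv.Perm ι) (j : ι) :
    (ν.prod μ).map (fun p => randomizedPIT p.2 (σ j) p.1)
      = (ν.prod μ).map (fun p => randomizedPIT p.2 j p.1) := by
  have hσ : Measurable fun z : ι → ℝ => z ∘ σ :=
    measurable_pi_lambda _ fun i => measurable_pi_apply _
  have hinv : (ν.prod μ).map (Prod.map id (· ∘ σ)) = ν.prod μ := by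
    rw [← Measure.map_prod_map ν μ measurable_id hσ, Measure.map_id, hμ]
  conv_rhs => rw [← hinv, Measure.map_map (measurable_randomizedPIT j) (measurable_id.prodMap hσ)]
  congr 1
  funext p
  exact (randomizedPIT_comp_perm p.2 σ j p.1).symm

theorem map_randomizedPIT_prod_eq {ι : Type*} [Fintype ι] {μ : Measure (ι → ℝ)}
    [IsProbabilityMeasure μ] (hμ : ∀ σ : Equiv.Perm ι, μ.map (· ∘ σ) = μ) (j : ι) :
    ((volume.restrict (Set.Ioo (0 : ℝ) 1)).prod μ).map (fun p => randomizedPIT p.2 j p.1)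
      = volume.restrict (Set.Ioo (0 : ℝ) 1) := by
  classical
  set ν := volume.restrict (Set.Ioo (0 : ℝ) 1)
  have hlaw : ∀ k, (ν.prod μ).map (fun p => randomizedPIT p.2 k p.1)
      = (ν.prod μ).map (fun p => randomizedPIT p.2 j p.1) := fun k => by
    simpa using map_randomizedPIT_perm_apply ν hμ (Equiv.swap j k) j
  have hcard : (Fintype.card ι : ℝ≥0∞) ≠ 0 := by
    have := Nonempty.intro j; exact_mod_cast Fintype.card_ne_zero
  refine Measure.ext_of_Iic _ _ fun t =>
    (ENNReal.mul_right_inj hcard (ENNReal.natCast_ne_top _)).1 ?_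
  have hpre : ∀ k,
      MeasurableSet ((fun p : ℝ × (ι → ℝ) => randomizedPIT p.2 k p.1) ⁻¹' Set.Iic t) :=
    fun k => measurable_randomizedPIT k measurableSet_Iic
  calc (Fintype.card ι : ℝ≥0∞) * (ν.prod μ).map (fun p => randomizedPIT p.2 j p.1) (Set.Iic t)
      = ∑ k, (ν.prod μ).map (fun p => randomizedPIT p.2 k p.1) (Set.Iic t) := by
        simp [hlaw]
    _ = ∑ k, ∫⁻ z, ν {s | randomizedPIT z k s ≤ t} ∂μ := by
        refine sum_congr rfl fun k _ => ?_
        rw [Measure.map_apply (measurable_randomizedPIT k) measurableSet_Iic,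
          Measure.prod_apply_symm (hpre k)]
        rfl
    _ = ∫⁻ z, ∑ k, ν {s | randomizedPIT z k s ≤ t} ∂μ :=
        (lintegral_finsetSum _ fun k _ => measurable_measure_prodMk_right (hpre k)).symm
    _ = (Fintype.card ι : ℝ≥0∞) * ν (Set.Iic t) := by
        simp only [ν, sum_volume_restrict_Ioo_randomizedPIT_le, lintegral_const, measure_univ,
          mul_one]

/-- **Randomized probability integral transform.** For exchangeable real-valued random
variables `Z 0, ..., Z n` (ties allowed) and `τ` uniform on `(0,1)` independent of them,
the randomized PIT `U = (1-τ) F⁻_{n+1}(Z_{n+1}) + τ F_{n+1}(Z_{n+1})` is uniform on `(0,1)`. -/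
theorem stmt_1
    {Ω : Type*} [MeasurableSpace Ω] (P : Measure Ω) [IsProbabilityMeasure P]
    (n : ℕ)
    (Z : Fin (n + 1) → Ω → ℝ) (τ : Ω → ℝ)
    (hmeas : ∀ i, Measurable (Z i)) (hτmeas : Measurable τ)
    (hτ : Measure.map τ P = volume.restrict (Set.Ioo (0 : ℝ) 1))
    (hindep : ProbabilityTheory.IndepFun τ (fun ω => fun i => Z i ω) P)
    (hexch : ∀ σ : Equiv.Perm (Fin (n + 1)),
      Measure.map (fun ω => fun i => Z (σ i) ω) P = Measure.map (fun ω => fun i => Z i ω) P) :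
    Measure.map (fun ω =>
        (1 - τ ω) *
          (((univ.filter (fun i : Fin (n + 1) => Z i ω < Z (Fin.last n) ω)).card : ℝ) / (n + 1))
        + τ ω *
          (((univ.filter (fun i : Fin (n + 1) => Z i ω ≤ Z (Fin.last n) ω)).card : ℝ) / (n + 1))) P
      = volume.restrict (Set.Ioo (0 : ℝ) 1) := by
  set W : Ω → Fin (n + 1) → ℝ := fun ω i => Z i ω
  have hW : Measurable W := measurable_pi_lambda _ hmeas
  have : IsProbabilityMeasure (P.map W) := Measure.isProbabilityMeasure_map hW.aemeasurable
  have hperm : ∀ σ : Equiv.Perm (Fin (n + 1)), (P.map W).map (· ∘ σ) = P.map W := fun σ => by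
    have hσ : Measurable fun z : Fin (n + 1) → ℝ => z ∘ σ :=
      measurable_pi_lambda _ fun i => measurable_pi_apply _
    rw [Measure.map_map hσ hW]
    exact hexch σ
  have hjoint : P.map (fun ω => (τ ω, W ω))
      = (volume.restrict (Set.Ioo (0 : ℝ) 1)).prod (P.map W) := by
    rw [← hτ]
    exact (ProbabilityTheory.indepFun_iff_map_prod_eq_prod_map_map hτmeas.aemeasurable
      hW.aemeasurable).1 hindep
  convert map_randomizedPIT_prod_eq hperm (Fin.last n) using 1
  rw [← hjoint, Measure.map_map (measurable_randomizedPIT _) (hτmeas.prodMk hW)]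
  congr 1
  funext ω
  simp [randomizedPIT, W]
end

section
/- Let Z_1, ..., Z_{n+1} be exchangeable real-valued random variables with no ties almost surely, let F_n be the empirical CDF of the first n, and let 0 ≤ a ≤ b ≤ 1. Then P(F_n(Z_{n+1}) ∈ [a,b]) = (⌊nb⌋ - ⌈na⌉ + 1)/(n+1) whenever ⌈na⌉ ≤ ⌊nb⌋, and in particular if (⌊nb⌋ - ⌈na⌉ + 1)/(n+1) ≥ 1-α then the set {z : F_n(z) ∈ [a,b]} contains Z_{n+1} with probability at least 1-α. -/
open MeasureTheory Finset
open scoped ENNReal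

/-- **Conformal coverage of empirical-CDF quantile regions.** For exchangeable real-valued
random variables with no ties, `P(Fₙ(Z_{n+1}) ∈ [a,b]) = (⌊nb⌋ - ⌈na⌉ + 1)/(n+1)` whenever
`⌈na⌉ ≤ ⌊nb⌋`; and if `(⌊nb⌋ - ⌈na⌉ + 1)/(n+1) ≥ 1-α` then the set `{z : Fₙ(z) ∈ [a,b]}`
contains `Z_{n+1}` with probability at least `1-α`. -/
theorem stmt_2
    {Ω : Type*} [MeasurableSpace Ω] (P : Measure Ω) [IsProbabilityMeasure P]
    (n : ℕ) (hn : 0 < n)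
    (Z : Fin (n + 1) → Ω → ℝ)
    (hmeas : ∀ i, Measurable (Z i))
    (hexch : ∀ σ : Equiv.Perm (Fin (n + 1)),
      Measure.map (fun ω => fun i => Z (σ i) ω) P = Measure.map (fun ω => fun i => Z i ω) P)
    (hties : ∀ᵐ ω ∂P, ∀ i j : Fin (n + 1), i ≠ j → Z i ω ≠ Z j ω)
    (a b : ℝ) (ha : 0 ≤ a) (hab : a ≤ b) (hb : b ≤ 1)
    (hgrid : ⌈(n : ℝ) * a⌉ ≤ ⌊(n : ℝ) * b⌋) :
    P {ω | ((univ.filter (fun i : Fin n => Z i.castSucc ω ≤ Z (Fin.last n) ω)).card : ℝ) / n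
          ∈ Set.Icc a b}
        = ENNReal.ofReal (((⌊(n : ℝ) * b⌋ : ℝ) - (⌈(n : ℝ) * a⌉ : ℝ) + 1) / (n + 1))
    ∧ ∀ α : ℝ,
        1 - α ≤ ((⌊(n : ℝ) * b⌋ : ℝ) - (⌈(n : ℝ) * a⌉ : ℝ) + 1) / (n + 1) →
        ENNReal.ofReal (1 - α) ≤
          P {ω | Z (Fin.last n) ω ∈
            {z : ℝ | ((univ.filter (fun i : Fin n => Z i.castSucc ω ≤ z)).card : ℝ) / n
              ∈ Set.Icc a b}} := by
  classical
  -- abbreviations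
  have hVmeas : Measurable (fun ω => fun i => Z i ω : Ω → Fin (n+1) → ℝ) :=
    measurable_pi_lambda _ (fun i => hmeas i)
  set V : Ω → Fin (n+1) → ℝ := fun ω i => Z i ω with hV
  set g : (Fin (n+1) → ℝ) → Fin (n+1) → ℕ :=
    fun v j => (univ.filter (fun i => v i ≤ v j)).card with hg
  set R : Ω → ℕ :=
    fun ω => (univ.filter (fun i : Fin n => Z i.castSucc ω ≤ Z (Fin.last n) ω)).card with hR
  -- measurability of g
  have hgmeas : ∀ j, Measurable (fun v : Fin (n+1) → ℝ => g v j) := by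
    intro j
    have heq : (fun v : Fin (n+1) → ℝ => g v j)
        = fun v => ∑ i : Fin (n+1), if v i ≤ v j then 1 else 0 := by
      funext v; simp only [hg, Finset.card_filter]
    rw [heq]
    exact Finset.measurable_sum _ fun i _ =>
      Measurable.ite (measurableSet_le (measurable_pi_apply i) (measurable_pi_apply j))
        measurable_const measurable_const
  -- g under permutations
  have hgswap : ∀ (σ : Equiv.Perm (Fin (n+1))) (v : Fin (n+1) → ℝ) (j : Fin (n+1)),
      g (fun i => v (σ i)) j = g v (σ j) := by
    intro σ v j
    exact Finset.card_equiv σ (fun i => by simp)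
  -- rank of Z_j has same law as rank of Z_last
  have hmapeq : ∀ (j : Fin (n+1)) (m : ℕ),
      P {ω | g (V ω) j = m} = P {ω | g (V ω) (Fin.last n) = m} := by
    intro j m
    set σ := Equiv.swap (Fin.last n) j with hσ
    have hσmeas : Measurable (fun ω => fun i => Z (σ i) ω) :=
      measurable_pi_lambda _ (fun i => hmeas _)
    have hS : MeasurableSet {v : Fin (n+1) → ℝ | g v (Fin.last n) = m} :=
      (hgmeas (Fin.last n)) (measurableSet_singleton m)
    have h1 : {ω | g (V ω) j = m}
        = (fun ω => fun i => Z (σ i) ω) ⁻¹' {v | g v (Fin.last n) = m} := by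
      ext ω
      simp only [Set.mem_setOf_eq, Set.mem_preimage]
      have h2 : g (fun i => Z (σ i) ω) (Fin.last n) = g (V ω) (σ (Fin.last n)) :=
        hgswap σ (V ω) (Fin.last n)
      rw [h2, hσ, Equiv.swap_apply_left]
    rw [h1, ← Measure.map_apply hσmeas hS, hexch σ, Measure.map_apply hVmeas hS]
    rfl
  -- the no-ties set
  set T : Set Ω := {ω | ∀ i j : Fin (n+1), i ≠ j → Z i ω ≠ Z j ω} with hT
  have hTmeas : MeasurableSet T := by
    have hTeq : T = ⋂ (i) (j) (_ : i ≠ j), {ω | Z i ω ≠ Z j ω} := by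
      ext ω; simp [hT]
    rw [hTeq]
    exact MeasurableSet.iInter fun i => MeasurableSet.iInter fun j =>
      MeasurableSet.iInter fun _ => (measurableSet_eq_fun (hmeas i) (hmeas j)).compl
  have hTc : P Tᶜ = 0 := by
    have h := ae_iff.mp hties
    have : Tᶜ = {ω | ¬ ∀ i j : Fin (n+1), i ≠ j → Z i ω ≠ Z j ω} := by
      rw [hT]; rfl
    rw [this]; exact h
  have hT1 : P T = 1 := (prob_compl_eq_zero_iff hTmeas).mp hTc
  -- injectivity of ranks on T
  have hinj : ∀ ω ∈ T, Function.Injective (fun j => g (V ω) j) := by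
    intro ω hω
    have hmono : ∀ j1 j2 : Fin (n+1), V ω j1 < V ω j2 → g (V ω) j1 < g (V ω) j2 := by
      intro j1 j2 hlt
      apply Finset.card_lt_card
      have hsub : (univ.filter (fun i => V ω i ≤ V ω j1))
          ⊆ (univ.filter (fun i => V ω i ≤ V ω j2)) := by
        intro i hi
        simp only [mem_filter, mem_univ, true_and] at hi ⊢
        exact hi.trans hlt.le
      refine (Finset.ssubset_iff_of_subset hsub).mpr ⟨j2, by simp, ?_⟩
      simp only [mem_filter, mem_univ, true_and]
      exact not_le.mpr hlt
    intro j1 j2 hgeq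
    simp only at hgeq
    by_contra hne
    rcases lt_trichotomy (V ω j1) (V ω j2) with h | h | h
    · exact absurd hgeq (ne_of_lt (hmono _ _ h))
    · exact hω j1 j2 hne h
    · exact absurd hgeq.symm (ne_of_lt (hmono _ _ h))
  -- surjectivity of ranks on T
  have hsurj : ∀ ω ∈ T, ∀ m : ℕ, 1 ≤ m → m ≤ n+1 → ∃ j, g (V ω) j = m := by
    intro ω hω m h1 h2
    have himg : (univ.image (fun j => g (V ω) j)) = Finset.Icc 1 (n+1) := by
      apply Finset.eq_of_subset_of_card_le
      · intro m' hm'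
        simp only [mem_image] at hm'
        obtain ⟨j, _, rfl⟩ := hm'
        rw [Finset.mem_Icc]
        constructor
        · exact Finset.card_pos.mpr ⟨j, by simp [hg]⟩
        · exact le_trans (Finset.card_filter_le _ _) (by simp)
      · rw [Finset.card_image_of_injective _ (hinj ω hω)]
        simp [Nat.card_Icc]
    have hmem : m ∈ univ.image (fun j => g (V ω) j) := by
      rw [himg, Finset.mem_Icc]; exact ⟨h1, h2⟩
    simpa using hmem
  -- the rank of Z_last is uniform
  have huniv : ∀ m : ℕ, 1 ≤ m → m ≤ n+1 →
      P {ω | g (V ω) (Fin.last n) = m} = ((n:ℝ≥0∞)+1)⁻¹ := by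
    intro m h1 h2
    set E : Fin (n+1) → Set Ω := fun j => {ω | g (V ω) j = m} ∩ T with hE
    have hEmeas : ∀ j, MeasurableSet (E j) := fun j =>
      (((hgmeas j).comp hVmeas) (measurableSet_singleton m)).inter hTmeas
    have hdisj : ((univ : Finset (Fin (n+1))) : Set (Fin (n+1))).PairwiseDisjoint E := by
      intro j1 _ j2 _ hne
      refine Set.disjoint_left.mpr ?_
      rintro ω ⟨h1', hω⟩ ⟨h2', _⟩
      exact hne (hinj ω hω (h1'.trans h2'.symm))
    have hcover : (⋃ j ∈ (univ : Finset (Fin (n+1))), E j) = T := by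
      ext ω
      simp only [Set.mem_iUnion, hE, Set.mem_inter_iff, Set.mem_setOf_eq, Finset.mem_coe,
        Finset.mem_univ, exists_prop, true_and]
      constructor
      · rintro ⟨j, _, hω⟩; exact hω
      · intro hω
        obtain ⟨j, hj⟩ := hsurj ω hω m h1 h2
        exact ⟨j, hj, hω⟩
    have hsum : ∑ j : Fin (n+1), P (E j) = 1 := by
      rw [← measure_biUnion_finset hdisj (fun j _ => hEmeas j), hcover, hT1]
    have hEj : ∀ j, P (E j) = P {ω | g (V ω) (Fin.last n) = m} := by
      intro j
      rw [hE]
      calc P ({ω | g (V ω) j = m} ∩ T) = P {ω | g (V ω) j = m} :=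
            measure_inter_conull hTc
        _ = _ := hmapeq j m
    have hcard : ((n:ℝ≥0∞)+1) * P {ω | g (V ω) (Fin.last n) = m} = 1 := by
      rw [Finset.sum_congr rfl (fun j _ => hEj j), Finset.sum_const, Finset.card_univ,
        Fintype.card_fin, nsmul_eq_mul, Nat.cast_add, Nat.cast_one] at hsum
      exact hsum
    have hx0 : ((n:ℝ≥0∞)+1) ≠ 0 := by
      simp
    have hxt : ((n:ℝ≥0∞)+1) ≠ ⊤ := by
      exact ENNReal.add_ne_top.mpr ⟨ENNReal.natCast_ne_top n, ENNReal.one_ne_top⟩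
    calc P {ω | g (V ω) (Fin.last n) = m}
        = (((n:ℝ≥0∞)+1)⁻¹ * ((n:ℝ≥0∞)+1)) * P {ω | g (V ω) (Fin.last n) = m} := by
          rw [ENNReal.inv_mul_cancel hx0 hxt, one_mul]
      _ = ((n:ℝ≥0∞)+1)⁻¹ := by rw [mul_assoc, hcard, mul_one]
  -- relation between g at last and R
  have hRg : ∀ ω, g (V ω) (Fin.last n) = R ω + 1 := by
    intro ω
    rw [hg, hR]
    simp only []
    rw [Finset.card_filter, Fin.sum_univ_castSucc, Finset.card_filter]
    simp [hV]
  have hRsets : ∀ k : ℕ, {ω | R ω = k} = {ω | g (V ω) (Fin.last n) = k + 1} := by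
    intro k
    ext ω
    simp only [Set.mem_setOf_eq, hRg ω]
    omega
  -- the grid endpoints
  set A : ℕ := (⌈(n : ℝ) * a⌉).toNat with hA
  set B : ℕ := (⌊(n : ℝ) * b⌋).toNat with hB
  have hceil0 : (0:ℤ) ≤ ⌈(n : ℝ) * a⌉ := Int.ceil_nonneg (by positivity)
  have hfloor0 : (0:ℤ) ≤ ⌊(n : ℝ) * b⌋ := le_trans hceil0 hgrid
  have hAZ : ((A:ℤ)) = ⌈(n : ℝ) * a⌉ := Int.toNat_of_nonneg hceil0
  have hBZ : ((B:ℤ)) = ⌊(n : ℝ) * b⌋ := Int.toNat_of_nonneg hfloor0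
  have hAB : A ≤ B := by
    have := hgrid
    omega
  have hBn : B ≤ n := by
    have h1 : ⌊(n : ℝ) * b⌋ ≤ ⌊(n : ℝ)⌋ := Int.floor_le_floor (by nlinarith)
    have h2 : ⌊(n : ℝ)⌋ = (n : ℤ) := Int.floor_natCast n
    omega
  have hn' : (0:ℝ) < n := by exact_mod_cast hn
  -- membership characterisation
  have hmemIff : ∀ ω, (((R ω : ℝ)) / n ∈ Set.Icc a b) ↔ (A ≤ R ω ∧ R ω ≤ B) := by
    intro ω
    rw [Set.mem_Icc]
    constructor
    · rintro ⟨h1, h2⟩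
      have hl : (n:ℝ) * a ≤ (R ω : ℝ) := by
        rw [le_div_iff₀ hn'] at h1; linarith
      have hr : (R ω : ℝ) ≤ (n:ℝ) * b := by
        rw [div_le_iff₀ hn'] at h2; linarith
      have hl' : ⌈(n : ℝ) * a⌉ ≤ ((R ω : ℤ)) := Int.ceil_le.mpr (by push_cast; exact hl)
      have hr' : ((R ω : ℤ)) ≤ ⌊(n : ℝ) * b⌋ := Int.le_floor.mpr (by push_cast; exact hr)
      omega
    · rintro ⟨h1, h2⟩
      have hl' : ⌈(n : ℝ) * a⌉ ≤ ((R ω : ℤ)) := by omega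
      have hr' : ((R ω : ℤ)) ≤ ⌊(n : ℝ) * b⌋ := by omega
      have hl : (n:ℝ) * a ≤ (R ω : ℝ) := by
        have := Int.ceil_le.mp hl'; push_cast at this; exact this
      have hr : (R ω : ℝ) ≤ (n:ℝ) * b := by
        have := Int.le_floor.mp hr'; push_cast at this; exact this
      constructor
      · rw [le_div_iff₀ hn']; linarith
      · rw [div_le_iff₀ hn']; linarith
  -- decompose the event
  have hEvent : {ω | ((R ω : ℝ)) / n ∈ Set.Icc a b}
      = ⋃ k ∈ Finset.Icc A B, {ω | R ω = k} := by
    ext ω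
    simp only [Set.mem_setOf_eq, Set.mem_iUnion, Finset.mem_Icc, exists_prop]
    rw [hmemIff ω]
    constructor
    · rintro ⟨h1, h2⟩; exact ⟨R ω, ⟨h1, h2⟩, rfl⟩
    · rintro ⟨k, ⟨h1, h2⟩, hk⟩; subst hk; exact ⟨h1, h2⟩
  -- main computation
  have hmain : P {ω | ((R ω : ℝ)) / n ∈ Set.Icc a b}
      = ENNReal.ofReal (((⌊(n : ℝ) * b⌋ : ℝ) - (⌈(n : ℝ) * a⌉ : ℝ) + 1) / (n + 1)) := by
    have hRkmeas : ∀ k : ℕ, MeasurableSet {ω | R ω = k} := by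
      intro k
      rw [hRsets k]
      exact ((hgmeas (Fin.last n)).comp hVmeas) (measurableSet_singleton (k+1))
    have hdisj : (↑(Finset.Icc A B) : Set ℕ).PairwiseDisjoint (fun k => {ω | R ω = k}) := by
      intro k1 _ k2 _ hne
      refine Set.disjoint_left.mpr ?_
      rintro ω h1 h2
      exact hne (h1.symm.trans h2)
    rw [hEvent, measure_biUnion_finset hdisj (fun k _ => hRkmeas k)]
    have hval : ∀ k ∈ Finset.Icc A B, P {ω | R ω = k} = ((n:ℝ≥0∞)+1)⁻¹ := by
      intro k hk
      rw [Finset.mem_Icc] at hk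
      rw [hRsets k]
      exact huniv (k+1) (by omega) (by omega)
    rw [Finset.sum_congr rfl hval, Finset.sum_const, Nat.card_Icc, nsmul_eq_mul]
    have hreal : ((⌊(n : ℝ) * b⌋ : ℝ) - (⌈(n : ℝ) * a⌉ : ℝ) + 1)
        = ((B + 1 - A : ℕ) : ℝ) := by
      have h1 : ((⌊(n : ℝ) * b⌋ : ℝ)) = (B : ℝ) := by exact_mod_cast congrArg (Int.cast : ℤ → ℝ) hBZ.symm
      have h2 : ((⌈(n : ℝ) * a⌉ : ℝ)) = (A : ℝ) := by exact_mod_cast congrArg (Int.cast : ℤ → ℝ) hAZ.symm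
      rw [h1, h2, Nat.cast_sub (by omega)]
      push_cast
      ring
    rw [hreal, ENNReal.ofReal_div_of_pos (by positivity), ENNReal.ofReal_natCast]
    have h3 : ENNReal.ofReal ((n:ℝ) + 1) = ((n:ℝ≥0∞) + 1) := by
      rw [show ((n:ℝ) + 1) = (((n+1 : ℕ)) : ℝ) by push_cast; ring, ENNReal.ofReal_natCast]
      push_cast
      ring
    rw [h3, div_eq_mul_inv]
  -- conclude
  constructor
  · exact hmain
  · intro α hα
    have hsets : {ω | Z (Fin.last n) ω ∈
        {z : ℝ | ((univ.filter (fun i : Fin n => Z i.castSucc ω ≤ z)).card : ℝ) / n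
          ∈ Set.Icc a b}}
        = {ω | ((R ω : ℝ)) / n ∈ Set.Icc a b} := rfl
    rw [hsets, hmain]
    exact ENNReal.ofReal_le_ofReal hα
end

section
/- Let Z^{(1)}, ..., Z^{(m)} ∈ ℝ^d be query points and for each l let σ^{(l)} be a permutation of [n+1] solving the augmented assignment problem with query Z^{(l)} (i.e., minimizing Σ_{i=1}^n ‖Z_i - U_{σ(i)}‖² + ‖Z^{(l)} - U_{σ(n+1)}‖²). Define ψ(Z^{(l)}) = U_{σ^{(l)}(n+1)} and set σ^{(m+1)} = σ^{(1)}. Then Σ_{l=1}^m ‖Z^{(l)} - ψ(Z^{(l)})‖² ≤ Σ_{l=1}^m ‖Z^{(l)} - ψ(Z^{(l+1)})‖², i.e., the graph {(Z^{(l)}, ψ(Z^{(l)}))} is cyclically monotone. -/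
open Finset

/-- **Cyclical monotonicity of the streaming assignment map.** If each permutation
`σ l` optimally solves the augmented assignment problem for query `Q l`, and
`ψ(Q l) = U (σ l (n+1))`, then `Σ_l ‖Q l - ψ(Q l)‖² ≤ Σ_l ‖Q l - ψ(Q (l+1))‖²` over any
cycle of queries. -/
theorem stmt_8 {d n m : ℕ} [NeZero m]
    (Z : Fin n → EuclideanSpace ℝ (Fin d)) (U : Fin (n + 1) → EuclideanSpace ℝ (Fin d))
    (Q : ZMod m → EuclideanSpace ℝ (Fin d))
    (σ : ZMod m → Equiv.Perm (Fin (n + 1)))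
    (hopt : ∀ l : ZMod m, ∀ π : Equiv.Perm (Fin (n + 1)),
      (∑ i : Fin n, ‖Z i - U ((σ l) i.castSucc)‖ ^ 2) + ‖Q l - U ((σ l) (Fin.last n))‖ ^ 2
        ≤ (∑ i : Fin n, ‖Z i - U (π i.castSucc)‖ ^ 2) + ‖Q l - U (π (Fin.last n))‖ ^ 2) :
    ∑ l : ZMod m, ‖Q l - U ((σ l) (Fin.last n))‖ ^ 2
      ≤ ∑ l : ZMod m, ‖Q l - U ((σ (l + 1)) (Fin.last n))‖ ^ 2 := by
  set C : ZMod m → ℝ := fun l => ∑ i : Fin n, ‖Z i - U ((σ l) i.castSucc)‖ ^ 2 with hC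
  have key : ∀ l : ZMod m,
      C l + ‖Q l - U ((σ l) (Fin.last n))‖ ^ 2
        ≤ C (l + 1) + ‖Q l - U ((σ (l + 1)) (Fin.last n))‖ ^ 2 := fun l =>
    hopt l (σ (l + 1))
  have hsum := Finset.sum_le_sum (fun l (_ : l ∈ Finset.univ) => key l)
  have hshift : ∑ l : ZMod m, C (l + 1) = ∑ l : ZMod m, C l := by
    exact Fintype.sum_equiv (Equiv.addRight 1) _ _ (fun l => rfl)
  rw [Finset.sum_add_distrib, Finset.sum_add_distrib, hshift] at hsum
  linarith
end

section
/- With ψ(Z) = U_{σ_Z(n+1)} the streaming assignment map (assigning to each query Z the target matched to it in an optimal augmented assignment), for any two points Z, Z' ∈ ℝ^d one has ⟨Z - Z', ψ(Z) - ψ(Z')⟩ ≥ 0; that is, ψ is a monotone map. -/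
open Finset

/-!
Compare the optimal assignment for `z` with the one for `z'` by exchanging their last targets:
the costs of the `n` fixed sources are the same on both sides, so optimality of each
assignment against the other leaves exactly the two-point cyclical monotonicity inequality
`‖z - ψ z‖² + ‖z' - ψ z'‖² ≤ ‖z - ψ z'‖² + ‖z' - ψ z‖²`. Expanding the squares, the excess of the
right-hand side over the left is `2 ⟪z - z', ψ z - ψ z'⟫`.
-/

section InnerProductSpace

variable {E : Type*} [NormedAddCommGroup E] [InnerProductSpace ℝ E]

theorem norm_sub_sq_exchange_sub (x x' a b : E) :
    (‖x - b‖ ^ 2 + ‖x' - a‖ ^ 2) - (‖x - a‖ ^ 2 + ‖x' - b‖ ^ 2) = 2 * inner ℝ (x - x') (a - b) := by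
  simp only [norm_sub_sq_real, inner_sub_left, inner_sub_right]
  ring

theorem inner_sub_sub_nonneg_of_norm_sq_add_le {x x' a b : E}
    (h : ‖x - a‖ ^ 2 + ‖x' - b‖ ^ 2 ≤ ‖x - b‖ ^ 2 + ‖x' - a‖ ^ 2) :
    0 ≤ inner ℝ (x - x') (a - b) := by
  linarith [norm_sub_sq_exchange_sub x x' a b]

end InnerProductSpace

/-- **Monotonicity of the streaming assignment map.** If `σz` and `σz'` optimally solve the
augmented assignment problems for queries `z` and `z'` respectively, and
`ψ(z) = U (σz (n+1))`, then `⟨z - z', ψ(z) - ψ(z')⟩ ≥ 0`. -/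
theorem stmt_9 {d n : ℕ}
    (Z : Fin n → EuclideanSpace ℝ (Fin d)) (U : Fin (n + 1) → EuclideanSpace ℝ (Fin d))
    (z z' : EuclideanSpace ℝ (Fin d))
    (σz σz' : Equiv.Perm (Fin (n + 1)))
    (hz : ∀ π : Equiv.Perm (Fin (n + 1)),
      (∑ i : Fin n, ‖Z i - U (σz i.castSucc)‖ ^ 2) + ‖z - U (σz (Fin.last n))‖ ^ 2
        ≤ (∑ i : Fin n, ‖Z i - U (π i.castSucc)‖ ^ 2) + ‖z - U (π (Fin.last n))‖ ^ 2)
    (hz' : ∀ π : Equiv.Perm (Fin (n + 1)),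
      (∑ i : Fin n, ‖Z i - U (σz' i.castSucc)‖ ^ 2) + ‖z' - U (σz' (Fin.last n))‖ ^ 2
        ≤ (∑ i : Fin n, ‖Z i - U (π i.castSucc)‖ ^ 2) + ‖z' - U (π (Fin.last n))‖ ^ 2) :
    0 ≤ (inner ℝ (z - z') (U (σz (Fin.last n)) - U (σz' (Fin.last n))) : ℝ) := by
  apply inner_sub_sub_nonneg_of_norm_sq_add_le
  linarith [hz σz', hz' σz]
end
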